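/- arXiv:2211.14033 — 2 statements merged into one kernel-verified Lean document; each statement's English description precedes it below -/
import Mathlib

section
/- Suppose block lower-triangular matrices (Φ_w, Φ_v) satisfy the achievability condition Φ_w(I − ZA) + Φ_v C Z = I. Then for every disturbance sequence w and noise sequence v, the vector e = Φ_w w + Φ_v v satisfies the error recursion e = Z A e − L C Z e + L v + w with L = Φ_w^{-1} Φ_v. -/
open Matrix Finset Polynomial

/-- Block lower-triangular: the (i,j) block vanishes when the block index i < j. -/
def IsBlockLT {k n m : ℕ} (M : Matrix (Fin k × Fin n) (Fin k × Fin m) ℝ) : Prop :=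
  ∀ i j, i.1 < j.1 → M i j = 0

/-- Strictly block lower-triangular: the (i,j) block vanishes when i ≤ j. -/
def IsStrictBlockLT {k n m : ℕ} (M : Matrix (Fin k × Fin n) (Fin k × Fin m) ℝ) : Prop :=
  ∀ i j, i.1 ≤ j.1 → M i j = 0

/-- Block-diagonal: the (i,j) block vanishes when i ≠ j. -/
def IsBlockDiag {k n m : ℕ} (M : Matrix (Fin k × Fin n) (Fin k × Fin m) ℝ) : Prop :=
  ∀ i j, i.1 ≠ j.1 → M i j = 0

/-- All diagonal blocks equal the identity. -/
def IdDiagBlocks {k n : ℕ} (M : Matrix (Fin k × Fin n) (Fin k × Fin n) ℝ) : Prop :=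
  ∀ i j, i.1 = j.1 → M i j = (if i.2 = j.2 then (1 : ℝ) else 0)

/-- The block-downshift operator: identity blocks on the first block subdiagonal. -/
def downshift (k n : ℕ) : Matrix (Fin k × Fin n) (Fin k × Fin n) ℝ :=
  fun i j => if (i.1 : ℕ) = (j.1 : ℕ) + 1 ∧ i.2 = j.2 then 1 else 0

/-- Euclidean norm of a vector. -/
noncomputable def enorm {ι : Type*} [Fintype ι] (x : ι → ℝ) : ℝ :=
  Real.sqrt (∑ i, x i ^ 2)

/-- Spectral norm (largest singular value) of a matrix. -/
noncomputable def specNorm {ι κ : Type*} [Fintype ι] [Fintype κ] [DecidableEq κ]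
    (M : Matrix ι κ ℝ) : ℝ :=
  ‖LinearMap.toContinuousLinearMap (Matrix.toEuclideanLin M)‖

/-- Squared Frobenius norm. -/
def frobSq {ι κ : Type*} [Fintype ι] [Fintype κ] (M : Matrix ι κ ℝ) : ℝ :=
  ∑ i, ∑ j, (M i j) ^ 2

lemma downshift_strict {k n : ℕ} : IsStrictBlockLT (downshift k n) := by
  intro i j hij
  unfold downshift
  rw [if_neg]
  rintro ⟨h1, -⟩
  have : (i.1 : ℕ) ≤ j.1 := hij
  omega

lemma mul_LT_strict {k n m p : ℕ} {M : Matrix (Fin k × Fin n) (Fin k × Fin m) ℝ}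
    {N : Matrix (Fin k × Fin m) (Fin k × Fin p) ℝ}
    (hM : IsBlockLT M) (hN : IsStrictBlockLT N) : IsStrictBlockLT (M * N) := by
  intro i j hij
  rw [Matrix.mul_apply]
  apply Finset.sum_eq_zero
  intro l _
  by_cases h : i.1 < l.1
  · rw [hM i l h, zero_mul]
  · rw [hN l j (le_trans (not_lt.mp h) hij), mul_zero]

lemma mul_LT_diag {k n m p : ℕ} {M : Matrix (Fin k × Fin n) (Fin k × Fin m) ℝ}
    {N : Matrix (Fin k × Fin m) (Fin k × Fin p) ℝ}
    (hM : IsBlockLT M) (hN : IsBlockDiag N) : IsBlockLT (M * N) := by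
  intro i j hij
  rw [Matrix.mul_apply]
  apply Finset.sum_eq_zero
  intro l _
  by_cases h : l.1 = j.1
  · rw [hM i l (h ▸ hij), zero_mul]
  · rw [hN l j h, mul_zero]

lemma mul_strict_diag {k n m p : ℕ} {M : Matrix (Fin k × Fin n) (Fin k × Fin m) ℝ}
    {N : Matrix (Fin k × Fin m) (Fin k × Fin p) ℝ}
    (hM : IsStrictBlockLT M) (hN : IsBlockDiag N) : IsStrictBlockLT (M * N) := by
  intro i j hij
  rw [Matrix.mul_apply]
  apply Finset.sum_eq_zero
  intro l _
  by_cases h : l.1 = j.1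
  · rw [hM i l (h ▸ hij), zero_mul]
  · rw [hN l j h, mul_zero]

lemma nat_index_lt {n a b c d : ℕ} (hb : b < n) (hd : d < n)
    (h : b + n * a < d + n * c) : a < c ∨ (a = c ∧ b < d) := by
  rcases lt_trichotomy a c with h1 | h1 | h1
  · exact Or.inl h1
  · subst h1; right; exact ⟨rfl, by omega⟩
  · exfalso
    have : n * c + n ≤ n * a := by
      have := Nat.mul_le_mul_left n (Nat.succ_le_of_lt h1)
      simpa [Nat.mul_succ] using this
    omega

lemma det_eq_one_of_LT_idDiag {k n : ℕ} {M : Matrix (Fin k × Fin n) (Fin k × Fin n) ℝ}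
    (hM : IsBlockLT M) (hd : IdDiagBlocks M) : M.det = 1 := by
  let e : Fin k × Fin n ≃ Fin (k * n) := finProdFinEquiv
  have hdet : M.det = (M.submatrix e.symm e.symm).det :=
    (Matrix.det_submatrix_equiv_self e.symm M).symm
  rw [hdet, Matrix.det_of_lowerTriangular]
  · apply Finset.prod_eq_one
    intro i _
    simp only [Matrix.submatrix_apply]
    rw [hd _ _ rfl, if_pos rfl]
  · intro i j hij
    have hij' : (i : Fin (k * n)) < j := hij
    simp only [Matrix.submatrix_apply]
    set p := e.symm i with hp
    set q := e.symm j with hq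
    have hei : e p = i := e.apply_symm_apply i
    have hej : e q = j := e.apply_symm_apply j
    have hlt : (p.2 : ℕ) + n * p.1 < (q.2 : ℕ) + n * q.1 := by
      have : (e p : ℕ) < (e q : ℕ) := by rw [hei, hej]; exact hij'
      simpa [e, finProdFinEquiv] using this
    rcases nat_index_lt p.2.2 q.2.2 hlt with h | ⟨h1, h2⟩
    · exact hM p q (by exact h)
    · rw [hd p q (Fin.ext h1), if_neg (fun hc => absurd (congrArg Fin.val hc) (by omega))]

theorem stmt16 {k n m : ℕ}
    (A : Matrix (Fin k × Fin n) (Fin k × Fin n) ℝ)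
    (C : Matrix (Fin k × Fin m) (Fin k × Fin n) ℝ)
    (Φw : Matrix (Fin k × Fin n) (Fin k × Fin n) ℝ)
    (Φv : Matrix (Fin k × Fin n) (Fin k × Fin m) ℝ)
    (hA : IsBlockDiag A) (hC : IsBlockDiag C)
    (hΦw : IsBlockLT Φw) (hΦv : IsBlockLT Φv)
    (hach : Φw * (1 - downshift k n * A) + Φv * C * downshift k n = 1)
    (w : Fin k × Fin n → ℝ) (v : Fin k × Fin m → ℝ) :
    Φw.mulVec w + Φv.mulVec v =
      (downshift k n * A).mulVec (Φw.mulVec w + Φv.mulVec v)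
      - ((Φw⁻¹ * Φv) * C * downshift k n).mulVec (Φw.mulVec w + Φv.mulVec v)
      + (Φw⁻¹ * Φv).mulVec v + w := by
  -- Rearranged achievability: Φw = 1 + Φw*(Z*A) - Φv*C*Z
  have hach' : Φw - Φw * (downshift k n * A) + Φv * C * downshift k n = 1 := by
    rw [← hach, mul_sub, mul_one]
  have hZA : IsStrictBlockLT (downshift k n * A) := mul_strict_diag downshift_strict hA
  have h1 : IsStrictBlockLT (Φw * (downshift k n * A)) := mul_LT_strict hΦw hZA
  have h2 : IsStrictBlockLT (Φv * C * downshift k n) :=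
    mul_LT_strict (mul_LT_diag hΦv hC) downshift_strict
  have hdiag : IdDiagBlocks Φw := by
    intro i j hij
    have := congrFun (congrFun hach' i) j
    simp only [Matrix.sub_apply, Matrix.add_apply, Matrix.one_apply] at this
    rw [h1 i j (le_of_eq hij), h2 i j (le_of_eq hij)] at this
    rw [sub_zero, add_zero] at this
    rw [this]
    congr 1
    simp only [eq_iff_iff]
    constructor
    · intro h; exact congrArg Prod.snd h
    · intro h; exact Prod.ext hij h
  have hdet : Φw.det = 1 := det_eq_one_of_LT_idDiag hΦw hdiag
  have hunit : IsUnit Φw.det := hdet ▸ isUnit_one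
  have hWinv : Φw * Φw⁻¹ = 1 := Matrix.mul_nonsing_inv _ hunit
  have hinvW : Φw⁻¹ * Φw = 1 := Matrix.nonsing_inv_mul _ hunit
  set L := Φw⁻¹ * Φv with hLdef
  set e := Φw.mulVec w + Φv.mulVec v with hedef
  have hΦwL : Φw * L = Φv := by
    rw [hLdef, ← Matrix.mul_assoc, hWinv, Matrix.one_mul]
  -- key identity after multiplying by Φw
  have key : Φw.mulVec ((downshift k n * A).mulVec e - (L * C * downshift k n).mulVec e
      + L.mulVec v + w) = Φw.mulVec e := by
    have hach'' : Φw * (downshift k n * A) = Φw - 1 + Φv * C * downshift k n := by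
      rw [← hach']; abel
    rw [Matrix.mulVec_add, Matrix.mulVec_add, Matrix.mulVec_sub]
    rw [Matrix.mulVec_mulVec, Matrix.mulVec_mulVec, Matrix.mulVec_mulVec]
    rw [hach'']
    have hmul2 : Φw * (L * C * downshift k n) = Φv * C * downshift k n := by
      rw [← Matrix.mul_assoc, ← Matrix.mul_assoc, ← Matrix.mul_assoc] at *
      rw [hΦwL]
    rw [hmul2, hΦwL]
    rw [Matrix.add_mulVec, Matrix.sub_mulVec, Matrix.one_mulVec]
    simp only [hedef, Matrix.mulVec_add]
    abel
  calc Φw.mulVec w + Φv.mulVec v = e := hedef.symm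
    _ = (1 : Matrix (Fin k × Fin n) (Fin k × Fin n) ℝ).mulVec e := (Matrix.one_mulVec e).symm
    _ = (Φw⁻¹ * Φw).mulVec e := by rw [hinvW]
    _ = Φw⁻¹.mulVec (Φw.mulVec e) := (Matrix.mulVec_mulVec _ _ _).symm
    _ = Φw⁻¹.mulVec (Φw.mulVec ((downshift k n * A).mulVec e
          - (L * C * downshift k n).mulVec e + L.mulVec v + w)) := by rw [key]
    _ = ((Φw⁻¹ * Φw)).mulVec ((downshift k n * A).mulVec e
          - (L * C * downshift k n).mulVec e + L.mulVec v + w) := Matrix.mulVec_mulVec _ _ _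
    _ = (downshift k n * A).mulVec e - (L * C * downshift k n).mulVec e + L.mulVec v + w := by
        rw [hinvW, Matrix.one_mulVec]
end

section
/- For any matrices Φ_v, Φ_w and any achievable gain L (i.e., Φ_v = Φ_w L with Φ_w invertible), and any noise realization (v, w) in the ellipsoids {‖H_v v‖ ≤ 1}, {‖H_w w‖ ≤ 1}, the quadratic regret cost ‖Q^{1/2}(Φ_v v + Φ_w w)‖² − ‖Q^{1/2}(Φ_{v,nc} v + Φ_{w,nc} w)‖² is bounded above by λ_max of the symmetric matrix [H_v^{-T}Φ_vᵀ; H_w^{-T}Φ_wᵀ] Q [·]ᵀ − J_nc evaluated on the product of unit balls (hence by λ_max of that matrix scaled by 2). -/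
open Matrix Finset Polynomial

/-- Euclidean norm of a vector. -/
noncomputable def euclNorm {ι : Type*} [Fintype ι] (x : ι → ℝ) : ℝ :=
  Real.sqrt (∑ i, x i ^ 2)

/-! With `z = (H_v v, H_w w)`, the transposed block matrix `[H_v⁻ᵀ Φ_vᵀ; H_w⁻ᵀ Φ_wᵀ]ᵀ` sends `z`
to `Φ_v v + Φ_w w`, so the regret is the quadratic form `zᵀ M z` of the symmetric matrix `M` whose
spectrum is bounded by `μ`. Hence the regret is at most `max μ 0 * ‖z‖²`, and `‖z‖² ≤ 2`. -/

lemma euclNorm_sq {ι : Type*} [Fintype ι] (x : ι → ℝ) : euclNorm x ^ 2 = x ⬝ᵥ x := by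
  rw [euclNorm, Real.sq_sqrt (Finset.sum_nonneg fun i _ => sq_nonneg _)]
  simp only [dotProduct, sq]

lemma dotProduct_self_le_one_of_euclNorm_le_one {ι : Type*} [Fintype ι] {x : ι → ℝ}
    (hx : euclNorm x ≤ 1) : x ⬝ᵥ x ≤ 1 := by
  rw [← euclNorm_sq]
  exact pow_le_one₀ (Real.sqrt_nonneg _) hx

lemma euclNorm_mulVec_sq_of_mul_self_eq {n : Type*} [Fintype n] {S Q : Matrix n n ℝ}
    (hS : S.IsHermitian) (hSQ : S * S = Q) (u : n → ℝ) :
    euclNorm (S *ᵥ u) ^ 2 = u ⬝ᵥ (Q *ᵥ u) := by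
  have hSt : Sᵀ = S := by simpa [conjTranspose_eq_transpose_of_trivial] using hS.eq
  rw [euclNorm_sq, dotProduct_mulVec, ← mulVec_transpose, hSt, ← hSQ, mulVec_mulVec,
    dotProduct_comm]

lemma dotProduct_mulVec_le_of_spectrum_le {n : Type*} [Fintype n] [DecidableEq n]
    {M : Matrix n n ℝ} (hM : M.IsHermitian) {c : ℝ} (hc : ∀ t ∈ spectrum ℝ M, t ≤ c)
    (z : n → ℝ) : z ⬝ᵥ (M *ᵥ z) ≤ c * (z ⬝ᵥ z) := by
  have hpsd : (algebraMap ℝ (Matrix n n ℝ) c - M).PosSemidef := by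
    refine posSemidef_iff_isHermitian_and_spectrum_nonneg.mpr ⟨?_, ?_⟩
    · exact IsSelfAdjoint.sub (IsSelfAdjoint.algebraMap _ (IsSelfAdjoint.all c)) hM
    · rw [← spectrum.singleton_sub_eq]
      rintro _ ⟨_, rfl, t, ht, rfl⟩
      exact sub_nonneg.mpr (hc t ht)
  have := hpsd.dotProduct_mulVec_nonneg z
  rw [star_trivial, sub_mulVec, dotProduct_sub, Algebra.algebraMap_eq_smul_one, smul_mulVec,
    one_mulVec, dotProduct_smul, smul_eq_mul] at this
  linarith

lemma dotProduct_mul_mul_transpose_mulVec {m k R : Type*} [Fintype m] [Fintype k]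
    [CommSemiring R] (C : Matrix m k R) (Q : Matrix k k R) (z : m → R) :
    z ⬝ᵥ ((C * Q * Cᵀ) *ᵥ z) = (Cᵀ *ᵥ z) ⬝ᵥ (Q *ᵥ (Cᵀ *ᵥ z)) := by
  rw [← mulVec_mulVec, ← mulVec_mulVec, dotProduct_mulVec, ← mulVec_transpose]

lemma transpose_inv_transpose_mul_mulVec {m k R : Type*} [Fintype m] [DecidableEq m]
    [CommRing R] {H : Matrix m m R} (hH : IsUnit H) (Φ : Matrix k m R) (v : m → R) :
    ((H⁻¹)ᵀ * Φᵀ)ᵀ *ᵥ (H *ᵥ v) = Φ *ᵥ v := by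
  rw [transpose_mul, transpose_transpose, transpose_transpose, mulVec_mulVec, Matrix.mul_assoc,
    nonsing_inv_mul H ((isUnit_iff_isUnit_det H).mp hH), Matrix.mul_one]

lemma transpose_fromRows_mulVec_sumElim {m n k R : Type*} [Fintype m] [Fintype n]
    [DecidableEq m] [DecidableEq n] [CommRing R] {Hv : Matrix m m R} {Hw : Matrix n n R}
    (hHv : IsUnit Hv) (hHw : IsUnit Hw) (Φv : Matrix k m R) (Φw : Matrix k n R)
    (v : m → R) (w : n → R) :
    (fromRows ((Hv⁻¹)ᵀ * Φvᵀ) ((Hw⁻¹)ᵀ * Φwᵀ))ᵀ *ᵥ Sum.elim (Hv *ᵥ v) (Hw *ᵥ w) =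
      Φv *ᵥ v + Φw *ᵥ w := by
  rw [transpose_fromRows, fromCols_mulVec_sumElim, transpose_inv_transpose_mul_mulVec hHv,
    transpose_inv_transpose_mul_mulVec hHw]

theorem stmt18_general {p q : ℕ}
    (Q Qh : Matrix (Fin p) (Fin p) ℝ) (hQ : Q.PosDef)
    (hQh : Qh.PosDef) (hQ2 : Qh * Qh = Q)
    (Hv : Matrix (Fin q) (Fin q) ℝ) (Hw : Matrix (Fin p) (Fin p) ℝ)
    (hHv : IsUnit Hv) (hHw : IsUnit Hw)
    (Φv Φvnc : Matrix (Fin p) (Fin q) ℝ) (Φw Φwnc : Matrix (Fin p) (Fin p) ℝ)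
    (μ : ℝ)
    (hμ : IsGreatest {t : ℝ | Module.End.HasEigenvalue (Matrix.toLin'
        (Matrix.fromRows ((Hv⁻¹)ᵀ * Φvᵀ) ((Hw⁻¹)ᵀ * Φwᵀ) * Q *
          (Matrix.fromRows ((Hv⁻¹)ᵀ * Φvᵀ) ((Hw⁻¹)ᵀ * Φwᵀ))ᵀ -
         Matrix.fromRows ((Hv⁻¹)ᵀ * Φvncᵀ) ((Hw⁻¹)ᵀ * Φwncᵀ) * Q *
          (Matrix.fromRows ((Hv⁻¹)ᵀ * Φvncᵀ) ((Hw⁻¹)ᵀ * Φwncᵀ))ᵀ)) t} μ)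
    (v : Fin q → ℝ) (w : Fin p → ℝ)
    (hv : euclNorm (Hv.mulVec v) ≤ 1) (hw : euclNorm (Hw.mulVec w) ≤ 1) :
    euclNorm (Qh.mulVec (Φv.mulVec v + Φw.mulVec w)) ^ 2 -
      euclNorm (Qh.mulVec (Φvnc.mulVec v + Φwnc.mulVec w)) ^ 2 ≤ 2 * max μ 0 := by
  set A := fromRows ((Hv⁻¹)ᵀ * Φvᵀ) ((Hw⁻¹)ᵀ * Φwᵀ)
  set B := fromRows ((Hv⁻¹)ᵀ * Φvncᵀ) ((Hw⁻¹)ᵀ * Φwncᵀ)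
  set z := Sum.elim (Hv *ᵥ v) (Hw *ᵥ w)
  have hsandwich (C : Matrix (Fin q ⊕ Fin p) (Fin p) ℝ) : (C * Q * Cᵀ).IsHermitian := by
    simpa only [conjTranspose_eq_transpose_of_trivial] using
      isHermitian_mul_mul_conjTranspose C hQ.isHermitian
  have hM : (A * Q * Aᵀ - B * Q * Bᵀ).IsHermitian := (hsandwich A).sub (hsandwich B)
  have hregret : euclNorm (Qh *ᵥ (Φv *ᵥ v + Φw *ᵥ w)) ^ 2 -
      euclNorm (Qh *ᵥ (Φvnc *ᵥ v + Φwnc *ᵥ w)) ^ 2 = z ⬝ᵥ ((A * Q * Aᵀ - B * Q * Bᵀ) *ᵥ z) := by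
    rw [sub_mulVec, dotProduct_sub, dotProduct_mul_mul_transpose_mulVec,
      dotProduct_mul_mul_transpose_mulVec, transpose_fromRows_mulVec_sumElim hHv hHw,
      transpose_fromRows_mulVec_sumElim hHv hHw,
      euclNorm_mulVec_sq_of_mul_self_eq hQh.isHermitian hQ2,
      euclNorm_mulVec_sq_of_mul_self_eq hQh.isHermitian hQ2]
  have hspec : ∀ t ∈ spectrum ℝ (A * Q * Aᵀ - B * Q * Bᵀ), t ≤ max μ 0 := fun t ht =>
    (hμ.2 (Module.End.hasEigenvalue_iff_mem_spectrum.mpr (by rwa [spectrum_toLin']))).trans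
      (le_max_left μ 0)
  have hz : z ⬝ᵥ z ≤ 2 := by
    rw [sumElim_dotProduct_sumElim]
    linarith [dotProduct_self_le_one_of_euclNorm_le_one hv,
      dotProduct_self_le_one_of_euclNorm_le_one hw]
  rw [hregret]
  calc z ⬝ᵥ ((A * Q * Aᵀ - B * Q * Bᵀ) *ᵥ z)
    _ ≤ max μ 0 * (z ⬝ᵥ z) := dotProduct_mulVec_le_of_spectrum_le hM hspec z
    _ ≤ max μ 0 * 2 := mul_le_mul_of_nonneg_left hz (le_max_right μ 0)
    _ = 2 * max μ 0 := mul_comm _ _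

theorem stmt18 {p q : ℕ}
    (Q Qh : Matrix (Fin p) (Fin p) ℝ) (hQ : Q.PosDef)
    (hQh : Qh.PosDef) (hQ2 : Qh * Qh = Q)
    (Hv : Matrix (Fin q) (Fin q) ℝ) (Hw : Matrix (Fin p) (Fin p) ℝ)
    (hHv : IsUnit Hv) (hHw : IsUnit Hw)
    (Φv Φvnc : Matrix (Fin p) (Fin q) ℝ) (Φw Φwnc : Matrix (Fin p) (Fin p) ℝ)
    (L : Matrix (Fin p) (Fin q) ℝ) (hL : Φv = Φw * L) (hΦw : IsUnit Φw)
    (μ : ℝ)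
    (hμ : IsGreatest {t : ℝ | Module.End.HasEigenvalue (Matrix.toLin'
        (Matrix.fromRows ((Hv⁻¹)ᵀ * Φvᵀ) ((Hw⁻¹)ᵀ * Φwᵀ) * Q *
          (Matrix.fromRows ((Hv⁻¹)ᵀ * Φvᵀ) ((Hw⁻¹)ᵀ * Φwᵀ))ᵀ -
         Matrix.fromRows ((Hv⁻¹)ᵀ * Φvncᵀ) ((Hw⁻¹)ᵀ * Φwncᵀ) * Q *
          (Matrix.fromRows ((Hv⁻¹)ᵀ * Φvncᵀ) ((Hw⁻¹)ᵀ * Φwncᵀ))ᵀ)) t} μ)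
    (v : Fin q → ℝ) (w : Fin p → ℝ)
    (hv : euclNorm (Hv.mulVec v) ≤ 1) (hw : euclNorm (Hw.mulVec w) ≤ 1) :
    euclNorm (Qh.mulVec (Φv.mulVec v + Φw.mulVec w)) ^ 2 -
      euclNorm (Qh.mulVec (Φvnc.mulVec v + Φwnc.mulVec w)) ^ 2 ≤ 2 * max μ 0 :=
  stmt18_general Q Qh hQ hQh hQ2 Hv Hw hHv hHw Φv Φvnc Φw Φwnc μ hμ v w hv hw
end
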